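/- arXiv:2002.05507 — 2 statements merged into one kernel-verified Lean document; each statement's English description precedes it below -/
import Mathlib

section
/- Let X be a finite-dimensional real inner product space, C a closed convex pointed generating cone in X, and e ∈ X such that B_e = {z ∈ C : ⟨e, z⟩ = 1} is a base of C. Then e lies in the interior of the dual cone C*. -/
/-!
If `⟪e, ·⟫ = 1` on a base `B` with `‖b‖ ≤ R` for `b ∈ B`, then every `f` with `‖e - f‖ < R⁻¹`
satisfies `⟪f, b⟫ ≥ 1 - ‖e - f‖ ‖b‖ > 0` on `B`, hence `⟪f, ·⟫ ≥ 0` on the cone `C = ℝ₊ B`.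
-/

open scoped RealInnerProductSpace

section

variable {X : Type*} [NormedAddCommGroup X] [InnerProductSpace ℝ X]

lemma inner_pos_of_norm_sub_mul_norm_lt_one {e f b : X} (heb : ⟪e, b⟫ = 1)
    (h : ‖e - f‖ * ‖b‖ < 1) : 0 < ⟪f, b⟫ := by
  have hsub : ⟪e - f, b⟫ = 1 - ⟪f, b⟫ := by rw [inner_sub_left, heb]
  linarith [real_inner_le_norm (e - f) b]

lemma mem_interior_setOf_forall_inner_pos {B : Set X} (hB : Bornology.IsBounded B) {e : X}
    (he : ∀ b ∈ B, ⟪e, b⟫ = 1) : e ∈ interior {f : X | ∀ b ∈ B, 0 < ⟪f, b⟫} := by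
  obtain ⟨R, hR, hBR⟩ := hB.exists_pos_norm_le
  refine interior_maximal ?_ Metric.isOpen_ball (Metric.mem_ball_self (inv_pos.2 hR))
  intro f hf b hb
  rw [Metric.mem_ball', dist_eq_norm] at hf
  refine inner_pos_of_norm_sub_mul_norm_lt_one (he b hb) ?_
  calc ‖e - f‖ * ‖b‖ ≤ ‖e - f‖ * R := by gcongr; exact hBR b hb
    _ < R⁻¹ * R := by gcongr
    _ = 1 := inv_mul_cancel₀ hR.ne'

end

theorem stmt_1_general {X : Type*} [NormedAddCommGroup X] [InnerProductSpace ℝ X]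
    (C : Set X)
    (e : X)
    (hcompact : IsCompact {z ∈ C | ⟪e, z⟫ = 1})
    (hrep : ∀ z ∈ C, z ≠ 0 →
      ∃! p : ℝ × X, 0 < p.1 ∧ p.2 ∈ {z ∈ C | ⟪e, z⟫ = 1} ∧ z = p.1 • p.2) :
    e ∈ interior {f : X | ∀ z ∈ C, 0 ≤ ⟪f, z⟫} := by
  refine interior_mono ?_
    (mem_interior_setOf_forall_inner_pos hcompact.isBounded fun b hb => hb.2)
  intro f hf z hz
  rcases eq_or_ne z 0 with rfl | hz0
  · simp
  obtain ⟨⟨t, b⟩, ⟨ht, hb, rfl⟩, -⟩ := hrep z hz hz0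
  rw [real_inner_smul_right]
  exact (mul_pos ht (hf b hb)).le

theorem stmt_1 {X : Type*} [NormedAddCommGroup X] [InnerProductSpace ℝ X]
    [FiniteDimensional ℝ X] (C : Set X)
    (hclosed : IsClosed C) (hconv : Convex ℝ C)
    (hcone : ∀ z ∈ C, ∀ t : ℝ, 0 ≤ t → t • z ∈ C)
    (hpointed : C ∩ (-C) = {0})
    (hgen : ∀ x : X, ∃ u ∈ C, ∃ w ∈ C, x = u - w)
    (e : X)
    (hcompact : IsCompact {z ∈ C | ⟪e, z⟫ = 1})
    (hbconv : Convex ℝ {z ∈ C | ⟪e, z⟫ = 1})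
    (hrep : ∀ z ∈ C, z ≠ 0 →
      ∃! p : ℝ × X, 0 < p.1 ∧ p.2 ∈ {z ∈ C | ⟪e, z⟫ = 1} ∧ z = p.1 • p.2) :
    e ∈ interior {f : X | ∀ z ∈ C, 0 ≤ ⟪f, z⟫} :=
  stmt_1_general C e hcompact hrep
end

section
/- The linear span of the set of Choi matrices of quantum channels from L(ℂ^{d_X}) to L(ℂ^{d_Y}) equals S = {M ∈ Herm(ℂ^{d_Y} ⊗ ℂ^{d_X}) : Tr_Y(M) = c·I_X for some c ∈ ℝ}; in particular, this span has dimension d_X² d_Y² − d_X² + 1 and is the smallest real linear subspace containing all such Choi matrices. -/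
open Matrix
open scoped Kronecker ComplexOrder

/-- Partial trace over the `ℂ^{d_Y}` (first) tensor factor. -/
noncomputable def ptraceY (dX dY : ℕ) (M : Matrix (Fin dY × Fin dX) (Fin dY × Fin dX) ℂ) :
    Matrix (Fin dX) (Fin dX) ℂ :=
  Matrix.of fun i j => ∑ k : Fin dY, M (k, i) (k, j)

/-!
The space `S` is the preimage, under the partial trace restricted to Hermitian matrices, of the
line `ℝ • 1`. That restricted partial trace is onto (it sends `dY⁻¹ • (1 ⊗ₖ A)` to `A`), so
`dim S = dim Herm(dY·dX) - dim Herm(dX) + 1`, and `dim_ℝ Herm(n) = n²` because multiplication by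
`i` identifies Hermitian with skew-Hermitian matrices. Choi matrices lie in `S`; conversely, if
`M ∈ S` with `Tr_Y M = c • 1`, then for `t` large `M + t • 1` is positive semidefinite with
partial trace `(c + dY t) • 1`, `c + dY t > 0`, so `M` is a combination of a Choi matrix and
`1 = dY • (dY⁻¹ • 1)`, which is itself a multiple of a Choi matrix.
-/

open Module

section SelfAdjoint

variable (A : Type*) [AddCommGroup A] [Module ℂ A] [StarAddMonoid A] [StarModule ℂ A]

def skewAdjointEquivSelfAdjoint : skewAdjoint A ≃ₗ[ℝ] selfAdjoint A :=
  .ofLinearMap skewAdjoint.negISMul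
    { toFun a := ⟨Complex.I • (a : A), by simp⟩
      map_add' a b := by ext; simp
      map_smul' r a := by ext; simp [smul_comm Complex.I] }
    (by ext; simp [smul_smul]) (by ext; simp [smul_smul])

theorem finrank_selfAdjoint_submodule [FiniteDimensional ℂ A] :
    finrank ℝ (selfAdjoint.submodule ℝ A) = finrank ℂ A := by
  have : FiniteDimensional ℝ A := .complexToReal A
  have e : A ≃ₗ[ℝ] selfAdjoint.submodule ℝ A × skewAdjoint.submodule ℝ A :=
    StarModule.decomposeProdAdjoint ℝ A
  have h1 := e.finrank_eq
  have h2 : finrank ℝ (skewAdjoint.submodule ℝ A) = finrank ℝ (selfAdjoint.submodule ℝ A) :=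
    (skewAdjointEquivSelfAdjoint A).finrank_eq
  rw [finrank_prod, h2, finrank_real_of_complex] at h1
  omega

end SelfAdjoint

theorem Submodule.finrank_comap_add_finrank {K V W : Type*} [DivisionRing K] [AddCommGroup V]
    [Module K V] [AddCommGroup W] [Module K W] [FiniteDimensional K V] {f : V →ₗ[K] W}
    (hf : Function.Surjective f) (L : Submodule K W) :
    finrank K (L.comap f) + finrank K W = finrank K V + finrank K L := by
  have hker : LinearMap.ker (L.mkQ ∘ₗ f) = L.comap f := by
    rw [LinearMap.ker_comp, Submodule.ker_mkQ]
  have hsurj : Function.Surjective (L.mkQ ∘ₗ f) := L.mkQ_surjective.comp hf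
  have := FiniteDimensional.of_surjective f hf
  have h1 := LinearMap.finrank_range_add_finrank_ker (L.mkQ ∘ₗ f)
  rw [LinearMap.range_eq_top.mpr hsurj, finrank_top, hker] at h1
  have h2 := L.finrank_quotient_add_finrank
  omega

open scoped Matrix.Norms.L2Operator MatrixOrder in
theorem Matrix.IsHermitian.exists_posSemidef_add_smul_one {n : Type*} [Fintype n]
    [DecidableEq n] {M : Matrix n n ℂ} (hM : M.IsHermitian) :
    ∃ s : ℝ, ∀ t : ℝ, s ≤ t → (M + t • 1).PosSemidef := by
  refine ⟨‖M‖, fun t ht => ?_⟩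
  have hnorm : (M + ‖M‖ • 1).PosSemidef := by
    have := IsSelfAdjoint.neg_algebraMap_norm_le_self (a := M) hM
    rwa [Matrix.le_iff, sub_neg_eq_add, Algebra.algebraMap_eq_smul_one] at this
  have hrest : ((t - ‖M‖) • (1 : Matrix n n ℂ)).PosSemidef :=
    PosSemidef.one.smul (sub_nonneg.mpr ht)
  simpa [add_assoc, ← add_smul] using hnorm.add hrest

section PartialTrace

variable {dX dY : ℕ}

noncomputable def ptraceYₗ (dX dY : ℕ) :
    Matrix (Fin dY × Fin dX) (Fin dY × Fin dX) ℂ →ₗ[ℂ] Matrix (Fin dX) (Fin dX) ℂ where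
  toFun := ptraceY dX dY
  map_add' M N := by ext; simp [ptraceY, Finset.sum_add_distrib]
  map_smul' z M := by ext; simp [ptraceY, Finset.mul_sum]

theorem ptraceY_add (M N : Matrix (Fin dY × Fin dX) (Fin dY × Fin dX) ℂ) :
    ptraceY dX dY (M + N) = ptraceY dX dY M + ptraceY dX dY N :=
  (ptraceYₗ dX dY).map_add M N

theorem ptraceY_real_smul (r : ℝ) (M : Matrix (Fin dY × Fin dX) (Fin dY × Fin dX) ℂ) :
    ptraceY dX dY (r • M) = r • ptraceY dX dY M :=
  ((ptraceYₗ dX dY).restrictScalars ℝ).map_smul r M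

theorem ptraceY_kronecker (B : Matrix (Fin dY) (Fin dY) ℂ) (A : Matrix (Fin dX) (Fin dX) ℂ) :
    ptraceY dX dY (B ⊗ₖ A) = B.trace • A := by
  ext i j; simp [ptraceY, trace, Finset.sum_mul]

theorem ptraceY_one : ptraceY dX dY 1 = (dY : ℂ) • 1 := by
  rw [← one_kronecker_one, ptraceY_kronecker, trace_one, Fintype.card_fin]

theorem ptraceY_inv_smul_one_kronecker (hdY : 0 < dY) (A : Matrix (Fin dX) (Fin dX) ℂ) :
    ptraceY dX dY ((dY : ℝ)⁻¹ • ((1 : Matrix (Fin dY) (Fin dY) ℂ) ⊗ₖ A)) = A := by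
  have hdY' : (dY : ℂ) ≠ 0 := by exact_mod_cast hdY.ne'
  rw [ptraceY_real_smul, ptraceY_kronecker, trace_one, Fintype.card_fin, ← Complex.coe_smul,
    smul_smul]
  push_cast
  rw [inv_mul_cancel₀ hdY', one_smul]

theorem Matrix.IsHermitian.ptraceY {M : Matrix (Fin dY × Fin dX) (Fin dY × Fin dX) ℂ}
    (hM : M.IsHermitian) : (ptraceY dX dY M).IsHermitian := by
  ext i j
  simp only [_root_.ptraceY, conjTranspose_apply, of_apply, star_sum]
  exact Finset.sum_congr rfl fun k _ => hM.apply (k, i) (k, j)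

noncomputable def ptraceYHerm (dX dY : ℕ) :
    selfAdjoint.submodule ℝ (Matrix (Fin dY × Fin dX) (Fin dY × Fin dX) ℂ) →ₗ[ℝ]
      selfAdjoint.submodule ℝ (Matrix (Fin dX) (Fin dX) ℂ) :=
  ((ptraceYₗ dX dY).restrictScalars ℝ).restrict fun _ hM => IsHermitian.ptraceY hM

@[simp]
theorem coe_ptraceYHerm
    (M : selfAdjoint.submodule ℝ (Matrix (Fin dY × Fin dX) (Fin dY × Fin dX) ℂ)) :
    (ptraceYHerm dX dY M : Matrix (Fin dX) (Fin dX) ℂ) = ptraceY dX dY M :=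
  rfl

theorem ptraceYHerm_surjective (hdY : 0 < dY) : Function.Surjective (ptraceYHerm dX dY) := by
  rintro ⟨A, hA⟩
  have hlift : ((1 : Matrix (Fin dY) (Fin dY) ℂ) ⊗ₖ A).IsHermitian := by
    rw [IsHermitian, conjTranspose_kronecker, conjTranspose_one, show Aᴴ = A from hA]
  exact ⟨⟨(dY : ℝ)⁻¹ • (1 ⊗ₖ A), Submodule.smul_mem _ _ hlift⟩,
    Subtype.ext (ptraceY_inv_smul_one_kronecker hdY A)⟩

noncomputable def hermitianScalarPtraceY (dX dY : ℕ) :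
    Submodule ℝ (Matrix (Fin dY × Fin dX) (Fin dY × Fin dX) ℂ) :=
  ((ℝ ∙ (⟨1, isHermitian_one⟩ : selfAdjoint.submodule ℝ (Matrix (Fin dX) (Fin dX) ℂ))).comap
    (ptraceYHerm dX dY)).map (selfAdjoint.submodule ℝ _).subtype

theorem mem_hermitianScalarPtraceY {M : Matrix (Fin dY × Fin dX) (Fin dY × Fin dX) ℂ} :
    M ∈ hermitianScalarPtraceY dX dY ↔
      M.IsHermitian ∧ ∃ c : ℝ, ptraceY dX dY M = (c : ℂ) • 1 := by
  simp only [hermitianScalarPtraceY, Submodule.mem_map, Submodule.mem_comap,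
    Submodule.mem_span_singleton]
  constructor
  · rintro ⟨⟨M, hM⟩, ⟨c, hc⟩, rfl⟩
    exact ⟨hM, c, by simpa [Complex.coe_smul] using (congrArg Subtype.val hc).symm⟩
  · rintro ⟨hM, c, hc⟩
    exact ⟨⟨M, hM⟩, ⟨c, Subtype.ext (by simpa [Complex.coe_smul] using hc.symm)⟩, rfl⟩

theorem finrank_hermitianScalarPtraceY (hdX : 0 < dX) (hdY : 0 < dY) :
    finrank ℝ (hermitianScalarPtraceY dX dY) = dX ^ 2 * dY ^ 2 - dX ^ 2 + 1 := by
  rw [hermitianScalarPtraceY, Submodule.finrank_map_subtype_eq]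
  have : Nonempty (Fin dX) := Fin.pos_iff_nonempty.mp hdX
  set one : selfAdjoint.submodule ℝ (Matrix (Fin dX) (Fin dX) ℂ) := ⟨1, isHermitian_one⟩
  have hone : one ≠ 0 := fun h => one_ne_zero (congrArg Subtype.val h)
  have h := Submodule.finrank_comap_add_finrank (ptraceYHerm_surjective (dX := dX) hdY) (ℝ ∙ one)
  rw [finrank_span_singleton hone, finrank_selfAdjoint_submodule, finrank_selfAdjoint_submodule,
    finrank_matrix, finrank_matrix] at h
  simp only [Fintype.card_prod, Fintype.card_fin, finrank_self, mul_one] at h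
  rw [show dY * dX * (dY * dX) = dX ^ 2 * dY ^ 2 by ring, ← sq] at h
  have hle : dX ^ 2 ≤ dX ^ 2 * dY ^ 2 := Nat.le_mul_of_pos_right _ (by positivity)
  omega

def choiMatrices (dX dY : ℕ) : Set (Matrix (Fin dY × Fin dX) (Fin dY × Fin dX) ℂ) :=
  {M | M.PosSemidef ∧ ptraceY dX dY M = 1}

theorem one_mem_span_choiMatrices (hdY : 0 < dY) :
    (1 : Matrix (Fin dY × Fin dX) (Fin dY × Fin dX) ℂ) ∈
      Submodule.span ℝ (choiMatrices dX dY) := by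
  have hdY' : (dY : ℝ) ≠ 0 := by exact_mod_cast hdY.ne'
  have hchoi : (dY : ℝ)⁻¹ • (1 : Matrix (Fin dY × Fin dX) (Fin dY × Fin dX) ℂ) ∈
      choiMatrices dX dY := by
    refine ⟨PosSemidef.one.smul (by positivity), ?_⟩
    rw [← one_kronecker_one, ptraceY_inv_smul_one_kronecker hdY]
  simpa [smul_inv_smul₀ hdY'] using
    Submodule.smul_mem _ (dY : ℝ) (Submodule.subset_span hchoi)

theorem mem_span_choiMatrices (hdY : 0 < dY) {M : Matrix (Fin dY × Fin dX) (Fin dY × Fin dX) ℂ}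
    (hM : M.IsHermitian) {c : ℝ} (hc : ptraceY dX dY M = (c : ℂ) • 1) :
    M ∈ Submodule.span ℝ (choiMatrices dX dY) := by
  obtain ⟨s, hs⟩ := hM.exists_posSemidef_add_smul_one
  set t := max s (|c| + 1)
  set a := c + dY * t
  have ha : 0 < a := by
    have ht : |c| + 1 ≤ t := le_max_right _ _
    have : t ≤ dY * t :=
      le_mul_of_one_le_left (by linarith [abs_nonneg c]) (by exact_mod_cast hdY)
    linarith [neg_abs_le c]
  have hchoi : a⁻¹ • (M + t • 1) ∈ choiMatrices dX dY := by
    refine ⟨(hs t (le_max_left _ _)).smul (inv_nonneg.mpr ha.le), ?_⟩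
    rw [ptraceY_real_smul, ptraceY_add, ptraceY_real_smul, hc, ptraceY_one]
    simp only [← Complex.coe_smul, smul_smul, ← add_smul]
    rw [show ((a⁻¹ : ℝ) : ℂ) * (c + t * dY) = ((a⁻¹ * a : ℝ) : ℂ) by push_cast [a]; ring,
      inv_mul_cancel₀ ha.ne', Complex.ofReal_one, one_smul]
  have hM_eq : M = a • a⁻¹ • (M + t • 1) - t • 1 := by
    rw [smul_inv_smul₀ ha.ne', add_sub_cancel_right]
  rw [hM_eq]
  exact Submodule.sub_mem _ (Submodule.smul_mem _ _ (Submodule.subset_span hchoi))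
    (Submodule.smul_mem _ _ (one_mem_span_choiMatrices hdY))

theorem span_choiMatrices (hdY : 0 < dY) :
    Submodule.span ℝ (choiMatrices dX dY) = hermitianScalarPtraceY dX dY := by
  refine le_antisymm (Submodule.span_le.mpr fun M hM => ?_) fun M hM => ?_
  · exact mem_hermitianScalarPtraceY.mpr ⟨hM.1.1, 1, by rw [hM.2]; simp⟩
  · obtain ⟨hH, c, hc⟩ := mem_hermitianScalarPtraceY.mp hM
    exact mem_span_choiMatrices hdY hH hc

end PartialTrace

theorem stmt_9 (dX dY : ℕ) (hdX : 0 < dX) (hdY : 0 < dY) :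
    ∃ S : Submodule ℝ (Matrix (Fin dY × Fin dX) (Fin dY × Fin dX) ℂ),
      (S : Set (Matrix (Fin dY × Fin dX) (Fin dY × Fin dX) ℂ)) =
        {M | M.IsHermitian ∧ ∃ c : ℝ, ptraceY dX dY M = (c : ℂ) • 1} ∧
      Submodule.span ℝ {M : Matrix (Fin dY × Fin dX) (Fin dY × Fin dX) ℂ |
          M.PosSemidef ∧ ptraceY dX dY M = 1} = S ∧
      Module.finrank ℝ S = dX ^ 2 * dY ^ 2 - dX ^ 2 + 1 :=
  ⟨hermitianScalarPtraceY dX dY, Set.ext fun _ => mem_hermitianScalarPtraceY,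
    span_choiMatrices hdY, finrank_hermitianScalarPtraceY hdX hdY⟩
end
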